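/- arXiv:math/9912045 — 2 statements merged into one kernel-verified Lean document; each statement's English description precedes it below -/
import Mathlib

section
/- The summatory function of Euler's totient satisfies φ_ℤ(x) = Σ_{k=1}^{⌊x⌋} φ(k) = (3/π²)x² + o(x²) as x → ∞. -/
open Filter Real

/-!
Since `φ = μ * id`, grouping `∑_{k ≤ x} φ(k)` by the Möbius factor gives
`∑_d μ(d) T(⌊x/d⌋)` with `T(m) = m(m+1)/2 ~ m²/2`. After division by `x²` the `d`-th term tends
to `μ(d)/(2d²)` and is bounded by `1/d²`, so by dominated convergence the quotient tends to
`∑_d μ(d)/(2d²) = 1/(2ζ(2)) = 3/π²`.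
-/

open Finset Topology
open scoped ArithmeticFunction.Moebius

theorem Finset.sum_Ioc_zero_natCast {K : Type*} [Field K] [CharZero K] (m : ℕ) :
    ∑ q ∈ Ioc 0 m, (q : K) = m * (m + 1) / 2 := by
  induction m with
  | zero => simp
  | succ m ih =>
    rw [sum_Ioc_succ_top (Nat.zero_le m), ih]
    push_cast
    ring

theorem Finset.sum_Ioc_zero_natCast_le_sq (m : ℕ) : ∑ q ∈ Ioc 0 m, (q : ℝ) ≤ m ^ 2 := by
  calc ∑ q ∈ Ioc 0 m, (q : ℝ) ≤ #(Ioc 0 m) • (m : ℝ) :=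
        sum_le_card_nsmul _ _ _ fun q hq ↦ by exact_mod_cast (mem_Ioc.mp hq).2
    _ = m ^ 2 := by simp [sq]

theorem tendsto_sum_Ioc_zero_floor_div_sq :
    Tendsto (fun y : ℝ ↦ (∑ q ∈ Ioc 0 ⌊y⌋₊, (q : ℝ)) / y ^ 2) atTop (𝓝 (1 / 2)) := by
  have hfloor : Tendsto (fun y : ℝ ↦ (⌊y⌋₊ : ℝ) / y) atTop (𝓝 1) := tendsto_nat_floor_div_atTop
  have hlim := (hfloor.mul (hfloor.add tendsto_inv_atTop_zero)).div_const 2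
  rw [add_zero, mul_one] at hlim
  refine hlim.congr' ?_
  filter_upwards [eventually_ne_atTop 0] with y hy
  rw [sum_Ioc_zero_natCast]
  field_simp

namespace ArithmeticFunction

theorem LSeries_moebius_eq_inv_riemannZeta {s : ℂ} (hs : 1 < s.re) :
    LSeries (fun n ↦ (μ n : ℂ)) s = (riemannZeta s)⁻¹ := by
  rw [← LSeries_zeta_eq_riemannZeta hs]
  exact eq_inv_of_mul_eq_one_right (LSeries_zeta_mul_Lseries_moebius hs)

theorem tsum_moebius_div_sq : ∑' n : ℕ, (μ n : ℝ) / n ^ 2 = 6 / π ^ 2 := by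
  have hL : LSeries (fun n ↦ (μ n : ℂ)) 2 = ((∑' n : ℕ, (μ n : ℝ) / n ^ 2 : ℝ) : ℂ) := by
    rw [Complex.ofReal_tsum, LSeries]
    congr 1 with n
    rcases eq_or_ne n 0 with rfl | hn
    · simp
    · rw [LSeries.term_of_ne_zero hn, show (2 : ℂ) = (2 : ℕ) by norm_num, Complex.cpow_natCast]
      push_cast
      rfl
  have h := LSeries_moebius_eq_inv_riemannZeta (s := 2) (by norm_num)
  rw [hL, riemannZeta_two] at h
  apply Complex.ofReal_injective
  rw [h]
  push_cast
  field_simp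

theorem moebius_mul_id_apply (n : ℕ) :
    ((μ : ArithmeticFunction ℝ) * (ArithmeticFunction.id : ArithmeticFunction ℝ)) n =
      n.totient := by
  rcases eq_or_ne n 0 with rfl | hn
  · simp
  simp only [mul_apply, intCoe_apply, natCoe_apply, id_apply]
  refine (sum_eq_iff_sum_mul_moebius_eq (f := fun k ↦ (k.totient : ℝ)) (g := Nat.cast)).mp
    (fun m _ ↦ ?_) n (Nat.pos_of_ne_zero hn)
  exact_mod_cast Nat.sum_totient m

theorem sum_Icc_totient_eq (N : ℕ) :
    ∑ k ∈ Icc 1 N, (k.totient : ℝ) = ∑ d ∈ Ioc 0 N, (μ d : ℝ) * ∑ q ∈ Ioc 0 (N / d), (q : ℝ) := by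
  rw [← Finset.Icc_succ_left_eq_Ioc]
  simp_rw [← moebius_mul_id_apply]
  exact sum_Ioc_mul_eq_sum_sum _ _ N


theorem sum_Icc_totient_div_sq_eq_tsum (x : ℝ) :
    (∑ k ∈ Icc 1 ⌊x⌋₊, (k.totient : ℝ)) / x ^ 2 =
      ∑' d : ℕ, (μ d : ℝ) * (∑ q ∈ Ioc 0 ⌊x / d⌋₊, (q : ℝ)) / x ^ 2 := by
  rw [sum_Icc_totient_eq, sum_div, tsum_eq_sum (s := Ioc 0 ⌊x⌋₊)]
  · refine sum_congr rfl fun d _ ↦ ?_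
    rw [Nat.floor_div_natCast]
  · intro d hd
    rcases eq_or_ne d 0 with rfl | hd0
    · simp
    · rw [Nat.floor_div_natCast, Nat.div_eq_of_lt (by simp_all [Nat.pos_iff_ne_zero])]
      simp

theorem tendsto_moebius_mul_sum_Ioc_floor_div_sq (d : ℕ) :
    Tendsto (fun x : ℝ ↦ (μ d : ℝ) * (∑ q ∈ Ioc 0 ⌊x / d⌋₊, (q : ℝ)) / x ^ 2) atTop
      (𝓝 ((μ d : ℝ) / 2 / d ^ 2)) := by
  rcases eq_or_ne d 0 with rfl | hd
  · simp
  have hd' : (0 : ℝ) < d := by positivity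
  have hlim := ((tendsto_sum_Ioc_zero_floor_div_sq.comp
    (tendsto_id.atTop_div_const hd')).const_mul (μ d : ℝ)).div_const ((d : ℝ) ^ 2)
  rw [mul_one_div] at hlim
  refine hlim.congr' (.of_forall fun x ↦ ?_)
  simp only [Function.comp_apply, id, div_pow]
  field_simp

theorem abs_moebius_mul_sum_Ioc_floor_div_sq_le {x : ℝ} (hx : 0 < x) (d : ℕ) :
    |(μ d : ℝ) * (∑ q ∈ Ioc 0 ⌊x / d⌋₊, (q : ℝ)) / x ^ 2| ≤ 1 / d ^ 2 := by
  rcases eq_or_ne d 0 with rfl | hd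
  · simp
  have hmu : |(μ d : ℝ)| ≤ 1 := by exact_mod_cast abs_moebius_le_one
  have hfloor : (⌊x / d⌋₊ : ℝ) ≤ x / d := Nat.floor_le (by positivity)
  have hsum : 0 ≤ ∑ q ∈ Ioc 0 ⌊x / d⌋₊, (q : ℝ) := by positivity
  calc |(μ d : ℝ) * (∑ q ∈ Ioc 0 ⌊x / d⌋₊, (q : ℝ)) / x ^ 2|
      ≤ 1 * (x / d) ^ 2 / x ^ 2 := by
        rw [abs_div, abs_mul, abs_of_nonneg hsum, abs_of_pos (pow_pos hx 2)]
        gcongr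
        exact (sum_Ioc_zero_natCast_le_sq _).trans (by gcongr)
    _ = 1 / d ^ 2 := by field_simp

theorem tendsto_sum_Icc_totient_div_sq :
    Tendsto (fun x : ℝ ↦ (∑ k ∈ Icc 1 ⌊x⌋₊, (k.totient : ℝ)) / x ^ 2) atTop (𝓝 (3 / π ^ 2)) := by
  have hsum : ∑' d : ℕ, (μ d : ℝ) / 2 / d ^ 2 = 3 / π ^ 2 := by
    simp_rw [div_right_comm _ (2 : ℝ), tsum_div_const, tsum_moebius_div_sq]
    ring
  have hlim := tendsto_tsum_of_dominated_convergence
    (Real.summable_one_div_nat_pow.mpr one_lt_two) tendsto_moebius_mul_sum_Ioc_floor_div_sq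
    ((eventually_gt_atTop 0).mono fun x hx d ↦ abs_moebius_mul_sum_Ioc_floor_div_sq_le hx d)
  rw [hsum] at hlim
  exact hlim.congr' (.of_forall fun x ↦ (sum_Icc_totient_div_sq_eq_tsum x).symm)

end ArithmeticFunction

/-- The summatory function of Euler's totient satisfies
`∑_{k=1}^{⌊x⌋} φ(k) = (3/π²) x² + o(x²)` as `x → ∞`. -/
theorem totient_summatory_asymptotic :
    (fun x : ℝ => (∑ k ∈ Finset.Icc 1 ⌊x⌋₊, (Nat.totient k : ℝ)) - (3 / π ^ 2) * x ^ 2)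
      =o[atTop] fun x : ℝ => x ^ 2 := by
  rw [Asymptotics.isLittleO_iff_tendsto fun x hx ↦ by simp_all]
  have hlim := ArithmeticFunction.tendsto_sum_Icc_totient_div_sq.sub_const (3 / π ^ 2)
  rw [sub_self] at hlim
  refine hlim.congr' ((eventually_ne_atTop 0).mono fun x hx ↦ ?_)
  field_simp
end

section
/- Let X be a Hadamard manifold with sectional curvature ≤ −a² < 0. There is a constant C₂ ≥ 0 depending only on a such that for any two horospheres H, H' bounding disjoint horoballs, with [p, p'] the common perpendicular segment (p ∈ H, p' ∈ H'), and any x ∈ H, x' ∈ H', one has |d(x, x') − (d(x,p) + d(p,p') + d(p',x'))| ≤ C₂. -/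
open Filter

/-- `c : ℝ → X` restricts to a geodesic ray on `[0, ∞)`. -/
def IsGeodesicRay {X : Type} [MetricSpace X] (c : ℝ → X) : Prop :=
  ∀ s t : ℝ, 0 ≤ s → 0 ≤ t → dist (c s) (c t) = |s - t|

/-- `b` is the Busemann function of the geodesic ray `c`. -/
def IsBusemannOf {X : Type} [MetricSpace X] (c : ℝ → X) (b : X → ℝ) : Prop :=
  IsGeodesicRay c ∧ ∀ y : X, Tendsto (fun t : ℝ => dist y (c t) - t) atTop (nhds (b y))

/-- `X` is a geodesic metric space. -/
def IsGeodesicSpace (X : Type) [MetricSpace X] : Prop :=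
  ∀ x y : X, ∀ r : ℝ, 0 ≤ r → r ≤ dist x y →
    ∃ z : X, dist x z = r ∧ dist z y = dist x y - r

/-- Gromov's four-point hyperbolicity condition with constant `δ`. -/
def IsDeltaHyperbolic (X : Type) [MetricSpace X] (δ : ℝ) : Prop :=
  ∀ x y z w : X,
    dist x y + dist z w ≤ max (dist x z + dist y w) (dist x w + dist y z) + 2 * δ

/-!
Write `(x|w)_p` for the Gromov product. For `x` in the first horoball and `w` in the second,
`(x|w)_p ≤ 16δ`. Otherwise the geodesics `[p,x]` and `[p,w]` fellow-travel, so by quasi-convexity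
of Busemann functions the point `m'` of `[p,w]` at distance `t` from `p` lies about
`min(t, d(p,x) - t)` deep in the first horoball. Then `m'` is at distance at least `d(p,p')` from
the second horoball, while quasi-convexity of `b'` along `[p,w]` forces either `t ≤ 2δ` or
`d(m',w) ≤ 2δ - d(p,p')`, and the latter would put `w` inside the first horoball.

Letting `w` run off along the ray of the second horoball turns this into
`b'(x) ≥ d(p,x) + d(p,p') - 32δ`, and symmetrically for `b(x')`. The four-point condition with
both ray endpoints at infinity gives `b'(x) + b(x') ≤ d(x,x') + d(p,p') + 2δ`; together these give
the lower bound on `d(x,x')`, and the triangle inequality gives the upper one.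
-/

section Hyperbolic

variable {X : Type} [MetricSpace X] {δ : ℝ}

noncomputable def gromovProduct (w x y : X) : ℝ := (dist w x + dist w y - dist x y) / 2

theorem gromovProduct_nonneg (w x y : X) : 0 ≤ gromovProduct w x y := by
  rw [gromovProduct]; linarith [dist_triangle_left x y w]

theorem gromovProduct_le_dist_left (w x y : X) : gromovProduct w x y ≤ dist w x := by
  rw [gromovProduct]; linarith [dist_triangle w x y]

theorem gromovProduct_le_dist_right (w x y : X) : gromovProduct w x y ≤ dist w y := by
  rw [gromovProduct]; linarith [dist_triangle_right w x y]

theorem IsDeltaHyperbolic.nonneg (hhyp : IsDeltaHyperbolic X δ) (x : X) : 0 ≤ δ := by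
  have h := hhyp x x x x
  simp only [dist_self, add_zero, max_self] at h
  linarith

theorem IsDeltaHyperbolic.min_sub_le_gromovProduct (hhyp : IsDeltaHyperbolic X δ)
    (w x y z : X) :
    min (gromovProduct w x z) (gromovProduct w y z) - δ ≤ gromovProduct w x y := by
  have h := hhyp x y z w
  have hxz := min_le_left (gromovProduct w x z) (gromovProduct w y z)
  have hyz := min_le_right (gromovProduct w x z) (gromovProduct w y z)
  simp only [gromovProduct, dist_comm w] at *
  rcases le_total (dist x z + dist y w) (dist x w + dist y z) with hle | hle
  · rw [max_eq_right hle] at h; linarith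
  · rw [max_eq_left hle] at h; linarith

theorem IsDeltaHyperbolic.dist_le_of_le_gromovProduct (hhyp : IsDeltaHyperbolic X δ)
    {p x w m m' : X} {t : ℝ} (hm : dist p m = t) (hmx : dist m x = dist p x - t)
    (hm' : dist p m' = t) (hm'w : dist m' w = dist p w - t) (ht : t ≤ gromovProduct p x w) :
    dist m m' ≤ 4 * δ := by
  have hxm' : t - δ ≤ gromovProduct p x m' := by
    have h := hhyp.min_sub_le_gromovProduct p x m' w
    have hm'_mid : t ≤ gromovProduct p m' w := by
      simp only [gromovProduct]; rw [hm', hm'w]; linarith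
    linarith [le_min ht hm'_mid]
  have h := hhyp.min_sub_le_gromovProduct p m m' x
  have hmin : t - δ ≤ min (gromovProduct p m x) (gromovProduct p m' x) := by
    refine le_min ?_ ?_
    · simp only [gromovProduct]; rw [hm, hmx]; linarith [hhyp.nonneg p]
    · rw [gromovProduct, dist_comm m' x]; exact hxm'.trans_eq (by rw [gromovProduct]; ring)
  have hmm' : gromovProduct p m m' = t - dist m m' / 2 := by rw [gromovProduct, hm, hm']; ring
  linarith

end Hyperbolic

namespace IsBusemannOf

variable {X : Type} [MetricSpace X] {c : ℝ → X} {b : X → ℝ}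

theorem le_dist_sub (hc : IsBusemannOf c b) (y : X) {t : ℝ} (ht : 0 ≤ t) :
    b y ≤ dist y (c t) - t := by
  refine le_of_tendsto (hc.2 y) ?_
  filter_upwards [eventually_ge_atTop t] with u hu
  have hray : dist (c t) (c u) = u - t := by
    rw [hc.1 t u ht (ht.trans hu), abs_sub_comm, abs_of_nonneg (by linarith)]
  linarith [dist_triangle y (c t) (c u)]

theorem le_add_dist (hc : IsBusemannOf c b) (y z : X) : b y ≤ b z + dist y z := by
  have h : b y - b z ≤ dist y z :=
    le_of_tendsto ((hc.2 y).sub (hc.2 z)) (Eventually.of_forall fun u => by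
      linarith [dist_triangle y z (c u)])
  linarith

theorem le_of_forall_le_dist (hgeo : IsGeodesicSpace X) (hc : IsBusemannOf c b) {y : X}
    (hy : 0 ≤ b y) {d : ℝ} (hd : ∀ w, b w ≤ 0 → d ≤ dist y w) : d ≤ b y := by
  refine le_of_forall_pos_le_add fun ε hε => ?_
  obtain ⟨t, hty, ht⟩ := (((hc.2 y).eventually_lt_const (lt_add_of_pos_right (b y) hε)).and
    (eventually_ge_atTop 0)).exists
  obtain ⟨w, hyw, hwc⟩ :=
    hgeo y (c t) _ (hy.trans (hc.le_dist_sub y ht)) (sub_le_self _ ht)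
  have hw : b w ≤ 0 := by linarith [hc.le_dist_sub w ht]
  linarith [hd w hw]

theorem le_max_of_dist_add_dist_eq {δ : ℝ} (hhyp : IsDeltaHyperbolic X δ)
    (hc : IsBusemannOf c b) {y z m : X} (hm : dist y m + dist m z = dist y z) :
    b m ≤ max (b y - dist y m) (b z - dist m z) + 2 * δ := by
  have key : b m + dist y z ≤ max (b y + dist m z) (b z + dist m y) + 2 * δ := by
    refine le_of_tendsto_of_tendsto' ((hc.2 m).add_const _)
      ((((hc.2 y).add_const (dist m z)).max ((hc.2 z).add_const (dist m y))).add_const _)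
      fun t => ?_
    have h := hhyp m (c t) y z
    rw [dist_comm (c t) z, dist_comm (c t) y, max_comm] at h
    have e : max (dist y (c t) - t + dist m z) (dist z (c t) - t + dist m y) =
        max (dist m z + dist y (c t)) (dist m y + dist z (c t)) - t := by
      rw [← max_sub_sub_right]; ring_nf
    rw [e]; linarith
  have e : max (b y + dist m z) (b z + dist m y) =
      max (b y - dist y m) (b z - dist m z) + dist y z := by
    rw [← hm, ← max_add_add_right, dist_comm m y]; ring_nf
  linarith

theorem le_sub_min_of_le_gromovProduct {δ : ℝ} (hgeo : IsGeodesicSpace X)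
    (hhyp : IsDeltaHyperbolic X δ) (hc : IsBusemannOf c b) {p x w m' : X} (hp : b p ≤ 0)
    (hx : b x ≤ 0) {t : ℝ} (ht0 : 0 ≤ t)
    (hm' : dist p m' = t) (hm'w : dist m' w = dist p w - t) (ht : t ≤ gromovProduct p x w) :
    b m' ≤ 6 * δ - min t (dist p x - t) := by
  obtain ⟨m, hm, hmx⟩ := hgeo p x t ht0 (ht.trans (gromovProduct_le_dist_left p x w))
  have hmm' := hhyp.dist_le_of_le_gromovProduct hm hmx hm' hm'w ht
  have hbm := hc.le_max_of_dist_add_dist_eq hhyp (show dist p m + dist m x = dist p x by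
    rw [hm, hmx]; ring)
  rw [hm, hmx] at hbm
  have hmax : max (b p - t) (b x - (dist p x - t)) ≤ -min t (dist p x - t) :=
    max_le (by linarith [min_le_left t (dist p x - t)])
      (by linarith [min_le_right t (dist p x - t)])
  linarith [hc.le_add_dist m' m, dist_comm m m']

end IsBusemannOf

theorem IsDeltaHyperbolic.busemann_add_busemann_le {X : Type} [MetricSpace X] {δ : ℝ}
    (hhyp : IsDeltaHyperbolic X δ) {c c' : ℝ → X} {b b' : X → ℝ}
    (hc : IsBusemannOf c b) (hc' : IsBusemannOf c' b') (p p' x x' : X) :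
    b' x + b x' ≤ max (dist x x' + dist p p' + (b p + b' p')) (b x + b' x') + 2 * δ := by
  refine le_of_tendsto_of_tendsto' ((hc'.2 x).add (hc.2 x'))
    (((((hc.2 p).add (hc'.2 p')).const_add (dist x x' + dist p p')).max
      ((hc.2 x).add (hc'.2 x'))).add_const _) fun t => ?_
  have h := hhyp x (c' t) x' (c t)
  have htri : dist (c' t) (c t) ≤ dist p' (c' t) + dist p p' + dist p (c t) := by
    linarith [dist_triangle4 (c' t) p' p (c t), dist_comm (c' t) p', dist_comm p' p]
  have e : max (dist x x' + dist p p' + (dist p (c t) - t + (dist p' (c' t) - t)))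
      (dist x (c t) - t + (dist x' (c' t) - t)) =
      max (dist x x' + (dist p' (c' t) + dist p p' + dist p (c t)))
        (dist x (c t) + dist x' (c' t)) - 2 * t := by
    rw [← max_sub_sub_right]; ring_nf
  rw [e]
  rw [dist_comm (c' t) x'] at h
  have hmono : max (dist x x' + dist (c' t) (c t)) (dist x (c t) + dist x' (c' t)) ≤
      max (dist x x' + (dist p' (c' t) + dist p p' + dist p (c t)))
        (dist x (c t) + dist x' (c' t)) := by
    gcongr
  linarith

section Horoballs

variable {X : Type} [MetricSpace X] {δ : ℝ} {c c' : ℝ → X} {b b' : X → ℝ} {p p' : X}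

theorem dist_le_busemann_of_closest (hgeo : IsGeodesicSpace X) (hc' : IsBusemannOf c' b')
    (hdis : Disjoint {y : X | b y ≤ 0} {y : X | b' y ≤ 0})
    (hmin : ∀ y y' : X, b y ≤ 0 → b' y' ≤ 0 → dist p p' ≤ dist y y') {y : X} (hy : b y ≤ 0) :
    dist p p' ≤ b' y :=
  hc'.le_of_forall_le_dist hgeo (not_le.mp (Set.disjoint_left.mp hdis hy)).le
    fun w hw => hmin y w hy hw

theorem min_le_of_le_gromovProduct_of_closest (hgeo : IsGeodesicSpace X)
    (hhyp : IsDeltaHyperbolic X δ) (hc : IsBusemannOf c b) (hc' : IsBusemannOf c' b')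
    (hdis : Disjoint {y : X | b y ≤ 0} {y : X | b' y ≤ 0})
    (hmin : ∀ y y' : X, b y ≤ 0 → b' y' ≤ 0 → dist p p' ≤ dist y y')
    (hp : b p ≤ 0) (hp' : b' p' ≤ 0) {x w : X} (hx : b x ≤ 0) (hw : b' w ≤ 0)
    {t : ℝ} (ht0 : 0 ≤ t) (ht : t ≤ gromovProduct p x w) :
    min t (dist p x - t) ≤ 8 * δ := by
  obtain ⟨m', hm', hm'w⟩ := hgeo p w t ht0 (ht.trans (gromovProduct_le_dist_right p x w))
  have hbm' := hc.le_sub_min_of_le_gromovProduct hgeo hhyp hp hx ht0 hm' hm'w ht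
  by_contra! hdeep
  have hm'_far : dist p p' ≤ b' m' := dist_le_busemann_of_closest hgeo hc' hdis hmin
    (by linarith [hhyp.nonneg p])
  have hw_far : dist p' p ≤ b w := dist_le_busemann_of_closest hgeo hc hdis.symm
    (fun y y' hy hy' => by rw [dist_comm p', dist_comm y]; exact hmin y' y hy' hy) hw
  have hconv := hc'.le_max_of_dist_add_dist_eq hhyp (show dist p m' + dist m' w = dist p w by
    rw [hm', hm'w]; ring)
  rw [hm', hm'w] at hconv
  rcases max_choice (b' p - t) (b' w - (dist p w - t)) with h | h <;> rw [h] at hconv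
  · linarith [hc'.le_add_dist p p', min_le_left t (dist p x - t), hhyp.nonneg p]
  · linarith [hc.le_add_dist w m', dist_comm w m', dist_comm p' p, dist_nonneg (x := p) (y := p')]

theorem gromovProduct_le_of_closest (hgeo : IsGeodesicSpace X)
    (hhyp : IsDeltaHyperbolic X δ) (hc : IsBusemannOf c b) (hc' : IsBusemannOf c' b')
    (hdis : Disjoint {y : X | b y ≤ 0} {y : X | b' y ≤ 0})
    (hmin : ∀ y y' : X, b y ≤ 0 → b' y' ≤ 0 → dist p p' ≤ dist y y')
    (hp : b p ≤ 0) (hp' : b' p' ≤ 0) {x w : X} (hx : b x ≤ 0) (hw : b' w ≤ 0) :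
    gromovProduct p x w ≤ 16 * δ := by
  have hthin {t : ℝ} : 0 ≤ t → t ≤ gromovProduct p x w → min t (dist p x - t) ≤ 8 * δ :=
    min_le_of_le_gromovProduct_of_closest hgeo hhyp hc hc' hdis hmin hp hp' hx hw
  rcases le_total (2 * gromovProduct p x w) (dist p x) with hk | hk
  · have h := hthin (gromovProduct_nonneg p x w) le_rfl
    rw [min_eq_left (by linarith)] at h
    linarith [hhyp.nonneg p]
  · have h := hthin (by positivity) (by linarith : dist p x / 2 ≤ gromovProduct p x w)
    rw [show dist p x - dist p x / 2 = dist p x / 2 by ring, min_self] at h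
    linarith [gromovProduct_le_dist_left p x w]

theorem dist_add_dist_le_busemann_of_closest (hgeo : IsGeodesicSpace X)
    (hhyp : IsDeltaHyperbolic X δ) (hc : IsBusemannOf c b) (hc' : IsBusemannOf c' b')
    (hdis : Disjoint {y : X | b y ≤ 0} {y : X | b' y ≤ 0})
    (hmin : ∀ y y' : X, b y ≤ 0 → b' y' ≤ 0 → dist p p' ≤ dist y y')
    (hp : b p ≤ 0) (hp' : b' p' ≤ 0) {x : X} (hx : b x ≤ 0) :
    dist p x + dist p p' ≤ b' x + 32 * δ := by
  have hp_far : dist p p' ≤ b' p := dist_le_busemann_of_closest hgeo hc' hdis hmin hp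
  have h : dist p x + b' p ≤ b' x + 32 * δ := by
    refine le_of_tendsto_of_tendsto ((hc'.2 p).const_add _) ((hc'.2 x).add_const _) ?_
    filter_upwards [eventually_ge_atTop 0] with t ht
    have hw : b' (c' t) ≤ 0 := by linarith [hc'.le_dist_sub (c' t) ht, dist_self (c' t)]
    have hk := gromovProduct_le_of_closest hgeo hhyp hc hc' hdis hmin hp hp' hx hw
    rw [gromovProduct] at hk
    linarith
  linarith

end Horoballs

/-- In a geodesic `δ`-hyperbolic space (e.g. a Hadamard manifold of curvature
`≤ −a² < 0`, where `δ` depends only on `a`), there is `C₂ ≥ 0` depending only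
on `δ` such that for any two horospheres `H, H'` bounding disjoint horoballs,
with common perpendicular segment `[p, p']` (`p ∈ H`, `p' ∈ H'`), and any
`x ∈ H`, `x' ∈ H'`, one has
`|d(x,x') − (d(x,p) + d(p,p') + d(p',x'))| ≤ C₂`. -/
theorem dist_approx_through_common_perpendicular (δ : ℝ) (hδ : 0 ≤ δ) :
    ∃ C₂ : ℝ, 0 ≤ C₂ ∧
      ∀ (X : Type) [MetricSpace X], IsGeodesicSpace X → IsDeltaHyperbolic X δ →
        ∀ (c c' : ℝ → X) (b b' : X → ℝ),
          IsBusemannOf c b → IsBusemannOf c' b' →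
          Disjoint {y : X | b y ≤ 0} {y : X | b' y ≤ 0} →
          ∀ p p' : X, b p = 0 → b' p' = 0 →
            (∀ y y' : X, b y ≤ 0 → b' y' ≤ 0 → dist p p' ≤ dist y y') →
            ∀ x x' : X, b x = 0 → b' x' = 0 →
              |dist x x' - (dist x p + dist p p' + dist p' x')| ≤ C₂ := by
  refine ⟨66 * δ, by linarith, ?_⟩
  intro X _ hgeo hhyp c c' b b' hc hc' hdis p p' hp hp' hmin x x' hx hx'
  have hmin' : ∀ y y' : X, b' y ≤ 0 → b y' ≤ 0 → dist p' p ≤ dist y y' :=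
    fun y y' hy hy' => by rw [dist_comm p', dist_comm y]; exact hmin y' y hy' hy
  have hx_far := dist_add_dist_le_busemann_of_closest hgeo hhyp hc hc' hdis hmin
    hp.le hp'.le hx.le
  have hx'_far := dist_add_dist_le_busemann_of_closest hgeo hhyp hc' hc hdis.symm hmin'
    hp'.le hp.le hx'.le
  have hsum := hhyp.busemann_add_busemann_le hc hc' p p' x x'
  rw [hp, hp', hx, hx', add_zero, add_zero, max_eq_left (by positivity)] at hsum
  rw [abs_le]
  constructor <;> linarith [dist_triangle4 x p p' x', dist_comm p x, dist_comm p' p]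
end
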